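/- For any nonzero rational number a, the product of |a|_p over all prime numbers p, multiplied by the usual archimedean absolute value |a|_∞, equals 1. -/

import Mathlib

/-!
Every absolute value is multiplicative, so the product over all places `|a|_∞ · ∏_p |a|_p`
is a multiplicative function on `ℚˣ`, invariant under `a ↦ -a`. It is `1` at a prime `q`,
since `|q|_q = q⁻¹` while `|q|_p = 1` for `p ≠ q`; by unique factorisation it is then `1`
on every nonzero integer, and writing `a · den a = num a`, on every nonzero rational.
-/

open Function

noncomputable def prodOverPlaces (a : ℚ) : ℝ :=
  (∏ᶠ p : Nat.Primes, (padicNorm p a : ℝ)) * |(a : ℝ)|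

lemma finite_mulSupport_padicNorm_intCast {n : ℤ} (hn : n ≠ 0) :
    (mulSupport fun p : Nat.Primes => (padicNorm p n : ℝ)).Finite := by
  refine (n.natAbs.primeFactors.finite_toSet.preimage
    Nat.Primes.coe_nat_injective.injOn).subset fun p hp => ?_
  have : Fact (p : ℕ).Prime := ⟨p.2⟩
  have hdvd : (p : ℤ) ∣ n := by
    by_contra h
    exact hp (by simp [(padicNorm.int_eq_one_iff n).mpr h])
  simpa [Nat.mem_primeFactors, p.2, hn] using Int.natCast_dvd.mp hdvd

lemma finite_mulSupport_padicNorm {a : ℚ} (ha : a ≠ 0) :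
    (mulSupport fun p : Nat.Primes => (padicNorm p a : ℝ)).Finite := by
  have hnum := finite_mulSupport_padicNorm_intCast (Rat.num_ne_zero.mpr ha)
  have hden := finite_mulSupport_padicNorm_intCast (n := a.den) (by exact_mod_cast a.den_nz)
  refine ((hnum.union hden).subset (mulSupport_div _ _)).subset fun p hp => ?_
  have : Fact (p : ℕ).Prime := ⟨p.2⟩
  rwa [mem_mulSupport, ← Rat.cast_div, ← padicNorm.div, Int.cast_natCast, Rat.num_div_den]

lemma prodOverPlaces_mul {a b : ℚ} (ha : a ≠ 0) (hb : b ≠ 0) :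
    prodOverPlaces (a * b) = prodOverPlaces a * prodOverPlaces b := by
  have hprod : ∏ᶠ p : Nat.Primes, (padicNorm p (a * b) : ℝ) =
      (∏ᶠ p : Nat.Primes, (padicNorm p a : ℝ)) *
        ∏ᶠ p : Nat.Primes, (padicNorm p b : ℝ) := by
    rw [← finprod_mul_distrib (finite_mulSupport_padicNorm ha) (finite_mulSupport_padicNorm hb)]
    refine finprod_congr fun p => ?_
    have : Fact (p : ℕ).Prime := ⟨p.2⟩
    rw [padicNorm.mul, Rat.cast_mul]
  rw [prodOverPlaces, prodOverPlaces, prodOverPlaces, hprod, Rat.cast_mul, abs_mul]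
  ring

lemma prodOverPlaces_neg (a : ℚ) : prodOverPlaces (-a) = prodOverPlaces a := by
  simp only [prodOverPlaces, padicNorm.neg, Rat.cast_neg, abs_neg]

lemma prodOverPlaces_prime {q : ℕ} (hq : q.Prime) : prodOverPlaces q = 1 := by
  have : Fact q.Prime := ⟨hq⟩
  have hprod : ∏ᶠ p : Nat.Primes, (padicNorm p q : ℝ) = (q : ℝ)⁻¹ := by
    rw [finprod_eq_single (fun p : Nat.Primes => (padicNorm p q : ℝ)) ⟨q, hq⟩ fun p hpq => ?_]
    · simp [padicNorm.padicNorm_p_of_prime]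
    · have : Fact (p : ℕ).Prime := ⟨p.2⟩
      have hne : (p : ℕ) ≠ q := fun h => hpq (Nat.Primes.coe_nat_injective h)
      simp [padicNorm.padicNorm_of_prime_of_ne hne]
  rw [prodOverPlaces, hprod, Rat.cast_natCast, Nat.abs_cast,
    inv_mul_cancel₀ (by exact_mod_cast hq.ne_zero)]

lemma prodOverPlaces_natCast {n : ℕ} (hn : n ≠ 0) : prodOverPlaces n = 1 := by
  induction n using Nat.recOnMul with
  | zero => exact absurd rfl hn
  | one => simp [prodOverPlaces]
  | prime q hq => exact prodOverPlaces_prime hq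
  | mul m k hm hk =>
    obtain ⟨hm0, hk0⟩ := Nat.mul_ne_zero_iff.mp hn
    rw [Nat.cast_mul, prodOverPlaces_mul (by exact_mod_cast hm0) (by exact_mod_cast hk0),
      hm hm0, hk hk0, mul_one]

lemma prodOverPlaces_intCast {n : ℤ} (hn : n ≠ 0) : prodOverPlaces n = 1 := by
  obtain ⟨m, rfl | rfl⟩ := n.eq_nat_or_neg
  · exact_mod_cast prodOverPlaces_natCast (by omega)
  · rw [Int.cast_neg, prodOverPlaces_neg]
    exact_mod_cast prodOverPlaces_natCast (by omega)

lemma prodOverPlaces_eq_one {a : ℚ} (ha : a ≠ 0) : prodOverPlaces a = 1 := by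
  have hden : (a.den : ℚ) ≠ 0 := by exact_mod_cast a.den_nz
  have h := prodOverPlaces_mul ha hden
  rwa [Rat.mul_den_eq_num, prodOverPlaces_intCast (Rat.num_ne_zero.mpr ha),
    prodOverPlaces_natCast a.den_nz, mul_one, eq_comm] at h

/-- Product formula over ℚ: for a nonzero rational `a`, the product of the
`p`-adic absolute values over all primes `p`, multiplied by the archimedean
absolute value, equals `1`. -/
theorem product_formula_rat (a : ℚ) (ha : a ≠ 0) :
    (∏ᶠ p : Nat.Primes, (padicNorm p a : ℝ)) * |(a : ℝ)| = 1 :=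
  prodOverPlaces_eq_one ha
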